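/- arXiv:2302.01938 — 7 statements merged into one kernel-verified Lean document; each statement's English description precedes it below -/
import Mathlib

section
/- Let (λ_m)_{m≥1} be a nonincreasing summable sequence of nonnegative reals with ∑_{m=1}^∞ λ_m = 1, let d ≥ 1, and let μ^{(d)} be its product-coarse-graining at scale d. Then the series ∑_{m=1}^∞ |μ^{(d)}_m − λ_m| converges and ∑_{m=1}^∞ |μ^{(d)}_m − λ_m| ≤ 4·∑_{l=d+1}^∞ λ_l. -/
/-!
For nonnegative reals `|x - y| = x + y - 2 min x y`, and both `μ` and `λ` have total mass `1`,
so `∑ |μₙ - λₙ| = 2 - 2 ∑ min μₙ λₙ`. On the first block `n < d` we have `μₙ = cₙ r₀` with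
`λₙ ≤ cₙ` and `r₀ ≤ 1`, hence `min μₙ λₙ ≥ r₀ λₙ`, and these sum to `r₀²`. Since
`r₀ = 1 - T` with `T = ∑_{l > d} λ_l`, the total is at most `2 - 2 (1 - T)² ≤ 4 T`.
-/

/-- Product-coarse-graining at scale `d` of a sequence `lam` (0-indexed: position `n`
corresponds to the 1-indexed position `m = n + 1`, so `n = i·d + (k-1)` with
`i = n / d`, `k - 1 = n % d`).  It is the product of the column marginal
`c^{(d)}_k = ∑_{j=0}^∞ λ_{j·d+k}` and the row marginal `r^{(d)}_i = ∑_{l=1}^d λ_{i·d+l}`. -/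
noncomputable def productCoarseGraining (lam : ℕ → ℝ) (d : ℕ) (n : ℕ) : ℝ :=
  (∑' j : ℕ, lam (j * d + n % d)) * (∑ l ∈ Finset.range d, lam (n / d * d + l))

open Finset

theorem hasSum_abs_sub {ι : Type*} {f g : ι → ℝ} {a b m : ℝ} (hf : HasSum f a) (hg : HasSum g b)
    (hmin : HasSum (fun i => min (f i) (g i)) m) :
    HasSum (fun i => |f i - g i|) (a + b - 2 * m) := by
  have hsplit : ∀ i, |f i - g i| = f i + g i - 2 * min (f i) (g i) := fun i => by
    linarith [max_sub_min_eq_abs' (f i) (g i), min_add_max (f i) (g i)]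
  simpa only [hsplit] using (hf.add hg).sub (hmin.mul_left 2)

namespace ProductCoarseGraining

variable {lam : ℕ → ℝ} {d : ℕ}

/-- The paper's `c^{(d)}_{k+1}` (indices here start at `0`). -/
noncomputable def colMarginal (lam : ℕ → ℝ) (d k : ℕ) : ℝ := ∑' j : ℕ, lam (j * d + k)

noncomputable def rowMarginal (lam : ℕ → ℝ) (d i : ℕ) : ℝ :=
  ∑ l ∈ range d, lam (i * d + l)

theorem productCoarseGraining_eq (lam : ℕ → ℝ) (d n : ℕ) :
    productCoarseGraining lam d n = colMarginal lam d (n % d) * rowMarginal lam d (n / d) :=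
  rfl

theorem hasSum_divMod [NeZero d] {S : ℝ} (h : HasSum lam S) :
    HasSum (fun p : ℕ × Fin d => lam (p.1 * d + p.2)) S :=
  (Nat.divModEquiv d).symm.hasSum_iff.mpr h

theorem summable_comp_mul_add [NeZero d] (hsum : Summable lam) (k : ℕ) :
    Summable fun j => lam (j * d + k) :=
  hsum.comp_injective fun _ _ h =>
    Nat.eq_of_mul_eq_mul_right (NeZero.pos d) (Nat.add_right_cancel h)

theorem hasSum_rowMarginal [NeZero d] {S : ℝ} (h : HasSum lam S) :
    HasSum (rowMarginal lam d) S :=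
  (hasSum_divMod h).prod_fiberwise fun i => by
    simpa only [rowMarginal, Fin.sum_univ_eq_sum_range (fun l => lam (i * d + l))]
      using hasSum_fintype fun k : Fin d => lam (i * d + k)

theorem hasSum_colMarginal [NeZero d] {S : ℝ} (h : HasSum lam S) :
    HasSum (fun k : Fin d => colMarginal lam d k) S :=
  ((Equiv.prodComm _ _).hasSum_iff.mpr (hasSum_divMod h)).prod_fiberwise fun k =>
    (summable_comp_mul_add h.summable k).hasSum

theorem le_colMarginal [NeZero d] (hnn : ∀ n, 0 ≤ lam n) (hsum : Summable lam) (n : ℕ) :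
    lam n ≤ colMarginal lam d (n % d) := by
  simpa only [colMarginal, Nat.div_add_mod'] using
    (summable_comp_mul_add (d := d) hsum (n % d)).le_tsum (n / d) fun j _ => hnn _

theorem hasSum_productCoarseGraining [NeZero d] (hnn : ∀ n, 0 ≤ lam n) {S : ℝ}
    (h : HasSum lam S) : HasSum (productCoarseGraining lam d) (S * S) := by
  have hc := hasSum_colMarginal (d := d) h
  have hr := hasSum_rowMarginal (d := d) h
  have hprod := hc.mul hr <| hc.summable.mul_of_nonneg hr.summable
    (fun _ => tsum_nonneg fun _ => hnn _) (fun _ => sum_nonneg fun _ _ => hnn _)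
  exact (((Equiv.prodComm _ _).trans (Nat.divModEquiv d).symm).symm.hasSum_iff.mpr hprod :)

theorem productCoarseGraining_nonneg (hnn : ∀ n, 0 ≤ lam n) (n : ℕ) :
    0 ≤ productCoarseGraining lam d n :=
  mul_nonneg (tsum_nonneg fun _ => hnn _) (sum_nonneg fun _ _ => hnn _)

theorem rowMarginal_zero_mul_le_productCoarseGraining [NeZero d] (hnn : ∀ n, 0 ≤ lam n)
    (hsum : Summable lam) {n : ℕ} (hn : n < d) :
    rowMarginal lam d 0 * lam n ≤ productCoarseGraining lam d n := by
  have hc := le_colMarginal (d := d) hnn hsum n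
  rw [productCoarseGraining_eq, Nat.div_eq_of_lt hn, mul_comm]
  exact mul_le_mul_of_nonneg_right hc (sum_nonneg fun _ _ => hnn _)

theorem rowMarginal_zero_add_tsum (hsum : Summable lam) :
    rowMarginal lam d 0 + ∑' l, lam (d + l) = ∑' n, lam n := by
  simpa only [rowMarginal, zero_mul, zero_add, add_comm d] using hsum.sum_add_tsum_nat_add d

end ProductCoarseGraining

open ProductCoarseGraining in
theorem stmt0_general (lam : ℕ → ℝ) (hnn : ∀ n, 0 ≤ lam n)
    (hsum : Summable lam) (h1 : ∑' n, lam n = 1) (d : ℕ) (hd : 1 ≤ d) :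
    Summable (fun n => |productCoarseGraining lam d n - lam n|) ∧
      ∑' n, |productCoarseGraining lam d n - lam n| ≤ 4 * ∑' l : ℕ, lam (d + l) := by
  have : NeZero d := ⟨by omega⟩
  have hlam : HasSum lam 1 := h1 ▸ hsum.hasSum
  set r₀ := rowMarginal lam d 0
  set T := ∑' l, lam (d + l)
  have hr₀T : r₀ + T = 1 := h1 ▸ rowMarginal_zero_add_tsum hsum
  have hT : 0 ≤ T := tsum_nonneg fun _ => hnn _
  have hμ : HasSum (productCoarseGraining lam d) 1 := by
    simpa using hasSum_productCoarseGraining (d := d) hnn hlam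
  have hmin : Summable fun n => min (productCoarseGraining lam d n) (lam n) :=
    Summable.of_nonneg_of_le (fun n => le_min (productCoarseGraining_nonneg hnn n) (hnn n))
      (fun n => min_le_right _ _) hsum
  have hfirstBlock : r₀ * r₀ ≤ ∑' n, min (productCoarseGraining lam d n) (lam n) :=
    calc r₀ * r₀ = ∑ n ∈ range d, r₀ * lam n := by
          simp only [← mul_sum, r₀, rowMarginal, zero_mul, zero_add]
      _ ≤ ∑ n ∈ range d, min (productCoarseGraining lam d n) (lam n) :=
          sum_le_sum fun n hn => le_min
            (rowMarginal_zero_mul_le_productCoarseGraining hnn hsum (mem_range.mp hn))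
            (mul_le_of_le_one_left (hnn n) (by linarith))
      _ ≤ _ := hmin.sum_le_tsum _ fun n _ => le_min (productCoarseGraining_nonneg hnn n) (hnn n)
  have habs := hasSum_abs_sub hμ hlam hmin.hasSum
  refine ⟨habs.summable, ?_⟩
  rw [habs.tsum_eq]
  nlinarith

theorem stmt0 (lam : ℕ → ℝ) (hanti : Antitone lam) (hnn : ∀ n, 0 ≤ lam n)
    (hsum : Summable lam) (h1 : ∑' n, lam n = 1) (d : ℕ) (hd : 1 ≤ d) :
    Summable (fun n => |productCoarseGraining lam d n - lam n|) ∧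
      ∑' n, |productCoarseGraining lam d n - lam n| ≤ 4 * ∑' l : ℕ, lam (d + l) :=
  stmt0_general lam hnn hsum h1 d hd
end

section
/- Let (λ_m)_{m≥1} be a nonincreasing summable sequence of nonnegative reals with ∑_{m=1}^∞ λ_m = 1, let d ≥ 1, and let μ^{(d)} be its product-coarse-graining at scale d. Then for every k with 1 ≤ k ≤ d, |μ^{(d)}_k − λ_k| ≤ ∑_{j=1}^∞ λ_{j·d+k} + λ_k · ∑_{l=d+1}^∞ λ_l. -/
/-- For `1 ≤ k ≤ d` (here `k` is 0-indexed, i.e. `k < d` stands for the 1-indexed `k+1`):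
`|μ^{(d)}_k − λ_k| ≤ ∑_{j=1}^∞ λ_{j·d+k} + λ_k · ∑_{l=d+1}^∞ λ_l`. -/
theorem stmt1 (lam : ℕ → ℝ) (hanti : Antitone lam) (hnn : ∀ n, 0 ≤ lam n)
    (hsum : Summable lam) (h1 : ∑' n, lam n = 1) (d : ℕ) (hd : 1 ≤ d)
    (k : ℕ) (hk : k < d) :
    |productCoarseGraining lam d k - lam k| ≤
      (∑' j : ℕ, lam ((j + 1) * d + k)) + lam k * ∑' l : ℕ, lam (d + l) := by
  have hmod : k % d = k := Nat.mod_eq_of_lt hk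
  have hdiv : k / d = 0 := Nat.div_eq_of_lt hk
  set A := ∑' j : ℕ, lam ((j + 1) * d + k) with hA
  set S := ∑ l ∈ Finset.range d, lam l with hS
  set T := ∑' l : ℕ, lam (d + l) with hT
  have hdpos : 0 < d := hd
  have hsub : Summable (fun j : ℕ => lam (j * d + k)) := by
    apply hsum.comp_injective
    intro a b hab
    simp only at hab
    exact Nat.eq_of_mul_eq_mul_right hdpos (by omega)
  have hsplit : (∑' j : ℕ, lam (j * d + k)) = lam k + A := by
    rw [Summable.tsum_eq_zero_add hsub]
    simp [hA]
  have hTeq : T = ∑' l : ℕ, lam (l + d) := by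
    rw [hT]; exact tsum_congr fun l => by rw [add_comm]
  have htot : S + T = 1 := by
    rw [hTeq, hS, Summable.sum_add_tsum_nat_add d hsum, h1]
  have hS0 : 0 ≤ S := Finset.sum_nonneg fun i _ => hnn i
  have hT0 : 0 ≤ T := by rw [hT]; exact tsum_nonneg fun l => hnn _
  have hA0 : 0 ≤ A := tsum_nonneg fun j => hnn _
  have hS1 : S ≤ 1 := by linarith
  have hμ : productCoarseGraining lam d k = (lam k + A) * S := by
    rw [productCoarseGraining, hmod, hdiv, hsplit]
    simp [hS]
  rw [hμ, abs_le]
  have hk0 : 0 ≤ lam k := hnn k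
  constructor <;> nlinarith [mul_nonneg hA0 hS0, mul_nonneg hk0 hT0]
end

section
/- Let (λ_m)_{m≥1} be a nonincreasing summable sequence of nonnegative reals with ∑_{m=1}^∞ λ_m = 1, and for each d ≥ 1 let μ^{(d)} be its product-coarse-graining at scale d. Then ∑_{m=1}^∞ |μ^{(d)}_m − λ_m| tends to 0 as d → ∞. -/
open Filter Finset

theorem sum_range_mul_eq_sum_sum_range {M : Type*} [AddCommMonoid M] (f : ℕ → M) (n d : ℕ) :
    ∑ m ∈ range (n * d), f m = ∑ i ∈ range n, ∑ l ∈ range d, f (i * d + l) := by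
  induction n with
  | zero => simp
  | succ n ih => rw [Nat.succ_mul, sum_range_add, ih, sum_range_succ]

theorem HasSum.sum_range_blocks_of_nonneg {f : ℕ → ℝ} {a : ℝ} (hf : HasSum f a)
    (hnn : ∀ n, 0 ≤ f n) {d : ℕ} (hd : 0 < d) :
    HasSum (fun i => ∑ l ∈ range d, f (i * d + l)) a := by
  rw [hasSum_iff_tendsto_nat_of_nonneg (fun i => sum_nonneg fun l _ => hnn _)]
  simp_rw [← sum_range_mul_eq_sum_sum_range]
  exact ((hasSum_iff_tendsto_nat_of_nonneg hnn a).1 hf).comp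
    (tendsto_atTop_mono (fun n => Nat.le_mul_of_pos_right n hd) tendsto_id)

theorem abs_mul_sub_le {c r x t : ℝ} (hx : 0 ≤ x) (hxc : x ≤ c) (hr : 0 ≤ r) (ht : 0 ≤ t)
    (hrt : r + t = 1) : |c * r - x| ≤ (c - x) + x * t := by
  rw [abs_le]
  constructor <;> nlinarith

/-- The coefficient `c^{(d)}_k` of the coarse-graining. -/
noncomputable def columnSum (lam : ℕ → ℝ) (d k : ℕ) : ℝ := ∑' j : ℕ, lam (j * d + k)

/-- The coefficient `r^{(d)}_i` of the coarse-graining. -/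
noncomputable def rowSum (lam : ℕ → ℝ) (d i : ℕ) : ℝ := ∑ l ∈ range d, lam (i * d + l)

section

variable {lam : ℕ → ℝ} {d : ℕ}

theorem columnSum_nonneg (hnn : ∀ n, 0 ≤ lam n) (k : ℕ) : 0 ≤ columnSum lam d k :=
  tsum_nonneg fun _ => hnn _

theorem rowSum_nonneg (hnn : ∀ n, 0 ≤ lam n) (i : ℕ) : 0 ≤ rowSum lam d i :=
  sum_nonneg fun _ _ => hnn _

theorem Summable.comp_mul_add (hlam : Summable lam) (hd : 0 < d) (k : ℕ) :
    Summable fun j => lam (j * d + k) :=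
  hlam.comp_injective fun _ _ h => Nat.eq_of_mul_eq_mul_right hd (Nat.add_right_cancel h)

theorem le_columnSum (hlam : Summable lam) (hnn : ∀ n, 0 ≤ lam n) (hd : 0 < d) (k : ℕ) :
    lam k ≤ columnSum lam d k := by
  simpa [columnSum] using (hlam.comp_mul_add hd k).le_tsum 0 fun j _ => hnn _

theorem hasSum_rowSum {a : ℝ} (hlam : HasSum lam a) (hnn : ∀ n, 0 ≤ lam n) (hd : 0 < d) :
    HasSum (rowSum lam d) a :=
  hlam.sum_range_blocks_of_nonneg hnn hd

theorem sum_columnSum {a : ℝ} (hlam : HasSum lam a) (hnn : ∀ n, 0 ≤ lam n) (hd : 0 < d) :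
    ∑ k ∈ range d, columnSum lam d k = a := by
  simp only [columnSum]
  rw [← Summable.tsum_finsetSum fun k _ => hlam.summable.comp_mul_add hd k]
  exact (hasSum_rowSum hlam hnn hd).tsum_eq

theorem rowSum_zero_add_tsum (hlam : Summable lam) :
    rowSum lam d 0 + ∑' n, lam (n + d) = ∑' n, lam n := by
  simpa [rowSum] using hlam.sum_add_tsum_nat_add d

end

namespace productCoarseGraining

variable {lam : ℕ → ℝ} {d : ℕ}

theorem apply_add_mul {l : ℕ} (i : ℕ) (hl : l < d) :
    productCoarseGraining lam d (i * d + l) = columnSum lam d l * rowSum lam d i := by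
  have hdiv : (i * d + l) / d = i := by
    rw [add_comm, Nat.add_mul_div_right _ _ (by omega), Nat.div_eq_of_lt hl, zero_add]
  rw [productCoarseGraining, columnSum, rowSum, Nat.mul_add_mod_of_lt hl, hdiv]

theorem apply_of_lt {n : ℕ} (hn : n < d) :
    productCoarseGraining lam d n = columnSum lam d n * rowSum lam d 0 := by
  simpa using apply_add_mul (lam := lam) 0 hn

theorem sum_range_add_mul (i : ℕ) :
    ∑ l ∈ range d, productCoarseGraining lam d (i * d + l) =
      (∑ k ∈ range d, columnSum lam d k) * rowSum lam d i := by
  rw [sum_mul]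
  exact sum_congr rfl fun l hl => apply_add_mul i (mem_range.1 hl)

theorem sum_range_abs_sub_le (hlam : HasSum lam 1) (hnn : ∀ n, 0 ≤ lam n) (hd : 0 < d) :
    ∑ n ∈ range d, |productCoarseGraining lam d n - lam n| ≤ 2 * ∑' n, lam (n + d) := by
  set t := ∑' n, lam (n + d)
  set r := rowSum lam d 0
  have hrt : r + t = 1 := by rw [rowSum_zero_add_tsum hlam.summable, hlam.tsum_eq]
  have ht : 0 ≤ t := tsum_nonneg fun _ => hnn _
  have hr : r = ∑ n ∈ range d, lam n := by simp [r, rowSum]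
  calc ∑ n ∈ range d, |productCoarseGraining lam d n - lam n|
      ≤ ∑ n ∈ range d, ((columnSum lam d n - lam n) + lam n * t) :=
        sum_le_sum fun n hn => by
          rw [apply_of_lt (mem_range.1 hn)]
          exact abs_mul_sub_le (hnn n) (le_columnSum hlam.summable hnn hd n)
            (rowSum_nonneg hnn 0) ht hrt
    _ = (1 - r) + r * t := by
        rw [sum_add_distrib, sum_sub_distrib, sum_columnSum hlam hnn hd, ← sum_mul, hr]
    _ ≤ 2 * t := by nlinarith

theorem sum_range_abs_sub_add_mul_le (hlam : HasSum lam 1) (hnn : ∀ n, 0 ≤ lam n) (hd : 0 < d)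
    (i : ℕ) : ∑ l ∈ range d,
      |productCoarseGraining lam d (i * d + l) - lam (i * d + l)| ≤ 2 * rowSum lam d i := by
  calc ∑ l ∈ range d, |productCoarseGraining lam d (i * d + l) - lam (i * d + l)|
      ≤ ∑ l ∈ range d, (productCoarseGraining lam d (i * d + l) + lam (i * d + l)) :=
        sum_le_sum fun l hl => by
          have hμ : 0 ≤ productCoarseGraining lam d (i * d + l) := by
            rw [apply_add_mul i (mem_range.1 hl)]
            exact mul_nonneg (columnSum_nonneg hnn l) (rowSum_nonneg hnn i)
          rw [abs_le]
          constructor <;> linarith [hnn (i * d + l)]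
    _ = 2 * rowSum lam d i := by
        rw [sum_add_distrib, sum_range_add_mul, sum_columnSum hlam hnn hd, one_mul, rowSum]
        ring

theorem tsum_abs_sub_le (hlam : HasSum lam 1) (hnn : ∀ n, 0 ≤ lam n) (hd : 0 < d) :
    ∑' n, |productCoarseGraining lam d n - lam n| ≤ 4 * ∑' n, lam (n + d) := by
  set t := ∑' n, lam (n + d)
  set E := fun i => ∑ l ∈ range d,
    |productCoarseGraining lam d (i * d + l) - lam (i * d + l)|
  have hrow := hasSum_rowSum hlam hnn hd
  have hrow_tail : ∑' i, rowSum lam d (i + 1) = t := by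
    have := hrow.summable.tsum_eq_zero_add
    rw [hrow.tsum_eq] at this
    linarith [rowSum_zero_add_tsum (d := d) hlam.summable, hlam.tsum_eq]
  refine Real.tsum_le_of_sum_range_le (fun _ => abs_nonneg _) fun N => ?_
  calc ∑ n ∈ range N, |productCoarseGraining lam d n - lam n|
      ≤ ∑ n ∈ range ((N + 1) * d), |productCoarseGraining lam d n - lam n| :=
        sum_le_sum_of_subset_of_nonneg (range_mono (by nlinarith))
          fun _ _ _ => abs_nonneg _
    _ = ∑ i ∈ range N, E (i + 1) + E 0 := by
        rw [sum_range_mul_eq_sum_sum_range, sum_range_succ']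
    _ ≤ ∑ i ∈ range N, 2 * rowSum lam d (i + 1) + 2 * t := by
        gcongr with i
        · exact sum_range_abs_sub_add_mul_le hlam hnn hd (i + 1)
        · simpa [E] using sum_range_abs_sub_le hlam hnn hd
    _ ≤ 4 * t := by
        have := ((summable_nat_add_iff 1).2 hrow.summable).sum_le_tsum (range N)
          fun i _ => rowSum_nonneg hnn (i + 1)
        rw [← mul_sum]
        linarith

end productCoarseGraining

theorem stmt3_general (lam : ℕ → ℝ) (hnn : ∀ n, 0 ≤ lam n)
    (hsum : Summable lam) (h1 : ∑' n, lam n = 1) :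
    Filter.Tendsto (fun d : ℕ => ∑' n, |productCoarseGraining lam d n - lam n|)
      Filter.atTop (nhds 0) := by
  have hlam : HasSum lam 1 := h1 ▸ hsum.hasSum
  have htail : Tendsto (fun d => 4 * ∑' n, lam (n + d)) atTop (nhds 0) := by
    simpa using (tendsto_sum_nat_add lam).const_mul 4
  refine squeeze_zero' (.of_forall fun d => tsum_nonneg fun _ => abs_nonneg _) ?_ htail
  filter_upwards [eventually_gt_atTop 0] with d hd
  exact productCoarseGraining.tsum_abs_sub_le hlam hnn hd

theorem stmt3 (lam : ℕ → ℝ) (hanti : Antitone lam) (hnn : ∀ n, 0 ≤ lam n)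
    (hsum : Summable lam) (h1 : ∑' n, lam n = 1) :
    Filter.Tendsto (fun d : ℕ => ∑' n, |productCoarseGraining lam d n - lam n|)
      Filter.atTop (nhds 0) :=
  stmt3_general lam hnn hsum h1
end

section
/- Let (λ_m)_{m≥1} be a nonincreasing summable sequence of nonnegative reals with ∑_{m=1}^∞ λ_m = 1 and finite entropy, i.e. the series ∑_{m=1}^∞ (−λ_m log λ_m) converges. For each d ≥ 1 define the block sums r^{(d)}_i := ∑_{l=1}^d λ_{i·d+l} for i ≥ 0. Then the coarse-grained entropy ∑_{i=0}^∞ (−r^{(d)}_i log r^{(d)}_i) tends to 0 as d → ∞. -/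
/-!
Cut the blocks into the first one and the rest. The first block carries mass
`∑_{l<d} λ_l → 1`, so its entropy tends to `-1 log 1 = 0`. Since `x ↦ -x log x` is
subadditive on `[0, ∞)`, the entropy of every later block is at most the entropy of the
`λ_m` it contains, so the later blocks together contribute at most the tail
`∑_{m ≥ d} (-λ_m log λ_m)` of a convergent series.
-/

/-- Block sums `r^{(d)}_i = ∑_{l=1}^d λ_{i·d+l}` (0-indexed in `l`). -/
noncomputable def rMarginal (lam : ℕ → ℝ) (d i : ℕ) : ℝ := ∑ l ∈ Finset.range d, lam (i * d + l)

open Real Finset Filter Topology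

theorem Real.negMulLog_sum_le {ι : Type*} (s : Finset ι) {x : ι → ℝ}
    (hx : ∀ i ∈ s, 0 ≤ x i) :
    negMulLog (∑ i ∈ s, x i) ≤ ∑ i ∈ s, negMulLog (x i) := by
  have hsum : negMulLog (∑ i ∈ s, x i) = ∑ i ∈ s, -(x i * log (∑ j ∈ s, x j)) := by
    simp only [negMulLog, neg_mul, sum_neg_distrib, sum_mul]
  rw [hsum]
  refine sum_le_sum fun i hi => ?_
  rcases (hx i hi).eq_or_lt with hxi | hxi
  · simp [← hxi]
  · have hlog : log (x i) ≤ log (∑ j ∈ s, x j) :=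
      log_le_log hxi (single_le_sum hx hi)
    rw [negMulLog, neg_mul, neg_le_neg_iff]
    exact mul_le_mul_of_nonneg_left hlog hxi.le

theorem HasSum.sum_range_blocks {α : Type*} [AddCommMonoid α] [TopologicalSpace α]
    [ContinuousAdd α] [RegularSpace α] {f : ℕ → α} {a : α} (hf : HasSum f a) {d : ℕ}
    (hd : d ≠ 0) :
    HasSum (fun i => ∑ l ∈ range d, f (i * d + l)) a := by
  have : NeZero d := ⟨hd⟩
  refine ((Nat.divModEquiv d).symm.hasSum_iff.mpr hf).prod_fiberwise fun i => ?_
  simpa [Fin.sum_univ_eq_sum_range (fun l => f (i * d + l))] using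
    hasSum_fintype (fun l : Fin d => f (i * d + l))

theorem rMarginal_zero (μ : ℕ → ℝ) (d : ℕ) : rMarginal μ d 0 = ∑ l ∈ range d, μ l := by
  simp [rMarginal]

theorem rMarginal_succ (μ : ℕ → ℝ) (d i : ℕ) :
    rMarginal μ d (i + 1) = rMarginal (fun m => μ (m + d)) d i := by
  simp only [rMarginal]
  exact sum_congr rfl fun l _ => congrArg μ (by ring)

section rMarginal

variable {μ : ℕ → ℝ} {d : ℕ}

theorem rMarginal_nonneg (hμ : ∀ n, 0 ≤ μ n) (d i : ℕ) : 0 ≤ rMarginal μ d i :=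
  sum_nonneg fun _ _ => hμ _

theorem rMarginal_le_tsum (hμ : ∀ n, 0 ≤ μ n) (hs : Summable μ) (d i : ℕ) :
    rMarginal μ d i ≤ ∑' n, μ n := by
  simpa [rMarginal] using
    hs.sum_le_tsum ((range d).map (addLeftEmbedding (i * d))) fun n _ => hμ n

variable (hμ : ∀ n, 0 ≤ μ n) (hr : ∀ i, rMarginal μ d i ≤ 1)
  (hent : Summable fun n => negMulLog (μ n)) (hd : d ≠ 0)
include hμ hr hent hd

theorem summable_negMulLog_rMarginal : Summable fun i => negMulLog (rMarginal μ d i) :=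
  .of_nonneg_of_le (fun i => negMulLog_nonneg (rMarginal_nonneg hμ d i) (hr i))
    (fun _ => negMulLog_sum_le _ fun _ _ => hμ _) (hent.hasSum.sum_range_blocks hd).summable

theorem tsum_negMulLog_rMarginal_le :
    ∑' i, negMulLog (rMarginal μ d i) ≤ ∑' n, negMulLog (μ n) :=
  hasSum_le (fun _ => negMulLog_sum_le _ fun _ _ => hμ _)
    (summable_negMulLog_rMarginal hμ hr hent hd).hasSum (hent.hasSum.sum_range_blocks hd)

end rMarginal

theorem stmt5_general (lam : ℕ → ℝ) (hnn : ∀ n, 0 ≤ lam n)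
    (hsum : Summable lam) (h1 : ∑' n, lam n = 1)
    (hent : Summable fun n => Real.negMulLog (lam n)) :
    Filter.Tendsto (fun d : ℕ => ∑' i : ℕ, Real.negMulLog (rMarginal lam d i))
      Filter.atTop (nhds 0) := by
  have hr : ∀ d i, rMarginal lam d i ≤ 1 := fun d i => h1 ▸ rMarginal_le_tsum hnn hsum d i
  have hbound : ∀ d ≠ 0, ∑' i, negMulLog (rMarginal lam d i)
      ≤ negMulLog (∑ l ∈ range d, lam l) + ∑' m, negMulLog (lam (m + d)) := by
    intro d hd
    have hr_tail : ∀ i, rMarginal (fun m => lam (m + d)) d i ≤ 1 := fun i =>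
      rMarginal_succ lam d i ▸ hr d (i + 1)
    have hent_tail : Summable fun m => negMulLog (lam (m + d)) :=
      (summable_nat_add_iff d).mpr hent
    rw [(summable_negMulLog_rMarginal hnn (hr d) hent hd).tsum_eq_zero_add, rMarginal_zero]
    simp only [rMarginal_succ]
    exact add_le_add_right (tsum_negMulLog_rMarginal_le (fun _ => hnn _) hr_tail hent_tail hd) _
  have hhead : Tendsto (fun d => negMulLog (∑ l ∈ range d, lam l)) atTop (𝓝 0) :=
    negMulLog_one ▸ (continuous_negMulLog.tendsto 1).comp (h1 ▸ hsum.hasSum.tendsto_sum_nat)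
  have htail := tendsto_sum_nat_add fun n => negMulLog (lam n)
  exact squeeze_zero' (.of_forall fun d => tsum_nonneg fun i =>
      negMulLog_nonneg (rMarginal_nonneg hnn d i) (hr d i))
    ((eventually_ne_atTop 0).mono hbound) (by simpa using hhead.add htail)

/-- The coarse-grained entropy `∑_{i=0}^∞ (−r^{(d)}_i log r^{(d)}_i)` tends to `0`
as `d → ∞` (with `0 log 0 = 0`, as encoded by `Real.negMulLog`). -/
theorem stmt5 (lam : ℕ → ℝ) (hanti : Antitone lam) (hnn : ∀ n, 0 ≤ lam n)
    (hsum : Summable lam) (h1 : ∑' n, lam n = 1)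
    (hent : Summable fun n => Real.negMulLog (lam n)) :
    Filter.Tendsto (fun d : ℕ => ∑' i : ℕ, Real.negMulLog (rMarginal lam d i))
      Filter.atTop (nhds 0) :=
  stmt5_general lam hnn hsum h1 hent
end

section
/- Let d ≥ 1 and let 1 ≥ λ_1 ≥ λ_2 ≥ … ≥ λ_d ≥ 0 satisfy ∑_{j=1}^d λ_j = 1 and −∑_{j=1}^d λ_j log λ_j ≤ S (with the convention 0·log 0 = 0). Let 0 < ε < 1 and let k ∈ {1,…,d} be such that ∑_{j=k}^d λ_j ≥ ε and ∑_{j=k+1}^d λ_j < ε. Then λ_k ≥ exp(−S/ε); in particular λ_1 ≥ exp(−S/ε). -/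
/-- Entropy lower bound on Schmidt coefficients: with `λ` 0-indexed (so `lam j` is the
1-indexed `λ_{j+1}`), nonincreasing, summing to 1 over `{0,…,d-1}`, of entropy at most `S`,
if `∑_{j=k}^{d-1} λ_j ≥ ε` and `∑_{j=k+1}^{d-1} λ_j < ε` then `λ_k ≥ exp(−S/ε)`;
in particular `λ_0 ≥ exp(−S/ε)`. -/
theorem stmt6 (d : ℕ) (hd : 1 ≤ d) (lam : ℕ → ℝ)
    (hle1 : lam 0 ≤ 1)
    (hmono : ∀ i j : ℕ, i ≤ j → j < d → lam j ≤ lam i)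
    (hnn : ∀ j : ℕ, j < d → 0 ≤ lam j)
    (hsum : ∑ j ∈ Finset.range d, lam j = 1)
    (S : ℝ) (hS : ∑ j ∈ Finset.range d, Real.negMulLog (lam j) ≤ S)
    (ε : ℝ) (hε0 : 0 < ε) (hε1 : ε < 1)
    (k : ℕ) (hk : k < d)
    (hge : ε ≤ ∑ j ∈ Finset.Ico k d, lam j)
    (hlt : ∑ j ∈ Finset.Ico (k + 1) d, lam j < ε) :
    Real.exp (-S / ε) ≤ lam k ∧ Real.exp (-S / ε) ≤ lam 0 := by
  have hpos : 0 < lam k := by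
    by_contra h
    push_neg at h
    have hle0 : ∑ j ∈ Finset.Ico k d, lam j ≤ 0 := by
      apply Finset.sum_nonpos
      intro j hj
      rw [Finset.mem_Ico] at hj
      exact le_trans (hmono k j hj.1 hj.2) h
    linarith
  have hk1 : lam k ≤ 1 := le_trans (hmono 0 k (Nat.zero_le k) hk) hle1
  have hlogk : Real.log (lam k) ≤ 0 := Real.log_nonpos (le_of_lt hpos) hk1
  -- Step 1 : sum over Ico ≤ S
  have h1 : ∑ j ∈ Finset.Ico k d, Real.negMulLog (lam j) ≤ S := by
    refine le_trans (Finset.sum_le_sum_of_subset_of_nonneg ?_ ?_) hS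
    · intro j hj
      rw [Finset.mem_Ico] at hj
      exact Finset.mem_range.mpr hj.2
    · intro j hj _
      rw [Finset.mem_range] at hj
      exact Real.negMulLog_nonneg (hnn j hj)
        (le_trans (hmono 0 j (Nat.zero_le j) hj) hle1)
  -- Step 2 : ε * (-log λ_k) ≤ sum over Ico
  have h2 : ∑ j ∈ Finset.Ico k d, lam j * (-Real.log (lam k))
      ≤ ∑ j ∈ Finset.Ico k d, Real.negMulLog (lam j) := by
    apply Finset.sum_le_sum
    intro j hj
    rw [Finset.mem_Ico] at hj
    rcases eq_or_lt_of_le (hnn j hj.2) with h0 | h0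
    · simp [← h0, Real.negMulLog]
    · have hlog : Real.log (lam j) ≤ Real.log (lam k) :=
        Real.log_le_log h0 (hmono k j hj.1 hj.2)
      unfold Real.negMulLog
      nlinarith
  rw [← Finset.sum_mul] at h2
  have h3 : ε * (-Real.log (lam k)) ≤ S := by
    calc ε * (-Real.log (lam k)) ≤ (∑ j ∈ Finset.Ico k d, lam j) * (-Real.log (lam k)) := by
          apply mul_le_mul_of_nonneg_right hge (by linarith)
      _ ≤ S := le_trans h2 h1
  have h4 : -S / ε ≤ Real.log (lam k) := by
    rw [div_le_iff₀ hε0] at *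
    nlinarith
  have h5 : Real.exp (-S / ε) ≤ lam k := by
    calc Real.exp (-S / ε) ≤ Real.exp (Real.log (lam k)) := Real.exp_le_exp.mpr h4
      _ = lam k := Real.exp_log hpos
  exact ⟨h5, le_trans h5 (hmono 0 k (Nat.zero_le k) hk)⟩
end

section
/- Let d ≥ 1 and let 1 ≥ λ_1 ≥ λ_2 ≥ … ≥ λ_d ≥ 0 satisfy ∑_{j=1}^d λ_j = 1 and −∑_{j=1}^d λ_j log λ_j ≤ S (with the convention 0·log 0 = 0). Let 0 < ε < 1 and let k ∈ {1,…,d} be such that ∑_{j=k}^d λ_j ≥ ε and ∑_{j=k+1}^d λ_j < ε. Then k ≤ exp(S/ε). -/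
/-- With `λ` 0-indexed (so `lam j` is the 1-indexed `λ_{j+1}`), nonincreasing, summing
to 1 over `{0,…,d-1}`, of entropy at most `S`, if `∑_{j=k}^{d-1} λ_j ≥ ε` and
`∑_{j=k+1}^{d-1} λ_j < ε` then the 1-indexed threshold `k + 1` satisfies
`k + 1 ≤ exp(S/ε)`. -/
theorem stmt7 (d : ℕ) (hd : 1 ≤ d) (lam : ℕ → ℝ)
    (hle1 : lam 0 ≤ 1)
    (hmono : ∀ i j : ℕ, i ≤ j → j < d → lam j ≤ lam i)
    (hnn : ∀ j : ℕ, j < d → 0 ≤ lam j)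
    (hsum : ∑ j ∈ Finset.range d, lam j = 1)
    (S : ℝ) (hS : ∑ j ∈ Finset.range d, Real.negMulLog (lam j) ≤ S)
    (ε : ℝ) (hε0 : 0 < ε) (hε1 : ε < 1)
    (k : ℕ) (hk : k < d)
    (hge : ε ≤ ∑ j ∈ Finset.Ico k d, lam j)
    (hlt : ∑ j ∈ Finset.Ico (k + 1) d, lam j < ε) :
    (k : ℝ) + 1 ≤ Real.exp (S / ε) := by
  have hlamk_nn : 0 ≤ lam k := hnn k hk
  have hlamk_pos : 0 < lam k := by
    by_contra h
    push_neg at h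
    have hz : lam k = 0 := le_antisymm h hlamk_nn
    have hz2 : ∑ j ∈ Finset.Ico k d, lam j = 0 := by
      apply Finset.sum_eq_zero
      intro j hj
      simp only [Finset.mem_Ico] at hj
      have h1 := hmono k j hj.1 hj.2
      have h2 := hnn j hj.2
      linarith [hz ▸ h1]
    linarith
  have hle : ∀ j, j < d → lam j ≤ 1 := by
    intro j hj
    have h1 : lam j ≤ ∑ i ∈ Finset.range d, lam i :=
      Finset.single_le_sum (fun i hi => hnn i (Finset.mem_range.mp hi))
        (Finset.mem_range.mpr hj)
    linarith
  have hkey : ε * (-Real.log (lam k)) ≤ S := by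
    have h1 : ∑ j ∈ Finset.Ico k d, lam j * (-Real.log (lam k)) ≤
        ∑ j ∈ Finset.Ico k d, Real.negMulLog (lam j) := by
      apply Finset.sum_le_sum
      intro j hj
      simp only [Finset.mem_Ico] at hj
      rcases eq_or_lt_of_le (hnn j hj.2) with h0 | h0
      · simp [Real.negMulLog, ← h0]
      · have hlog : Real.log (lam j) ≤ Real.log (lam k) :=
          Real.log_le_log h0 (hmono k j hj.1 hj.2)
        unfold Real.negMulLog
        nlinarith
    have h2 : ∑ j ∈ Finset.Ico k d, Real.negMulLog (lam j) ≤
        ∑ j ∈ Finset.range d, Real.negMulLog (lam j) := by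
      rw [Finset.range_eq_Ico]
      apply Finset.sum_le_sum_of_subset_of_nonneg
        (Finset.Ico_subset_Ico (Nat.zero_le k) le_rfl)
      intro j hj _
      have hjd : j < d := (Finset.mem_Ico.mp hj).2
      exact Real.negMulLog_nonneg (hnn j hjd) (hle j hjd)
    rw [← Finset.sum_mul] at h1
    have hlognn : 0 ≤ -Real.log (lam k) := by
      have := Real.log_nonpos hlamk_nn (hle k hk)
      linarith
    have h3 := mul_le_mul_of_nonneg_right hge hlognn
    linarith
  have hk1 : ((k : ℝ) + 1) * lam k ≤ 1 := by
    have h1 : ∑ _j ∈ Finset.range (k + 1), lam k ≤ ∑ j ∈ Finset.range (k + 1), lam j := by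
      apply Finset.sum_le_sum
      intro j hj
      exact hmono j k (Nat.lt_succ_iff.mp (Finset.mem_range.mp hj)) hk
    have h2 : ∑ j ∈ Finset.range (k + 1), lam j ≤ 1 := by
      rw [← hsum]
      apply Finset.sum_le_sum_of_subset_of_nonneg (Finset.range_subset_range.mpr hk)
      intro j hj _
      exact hnn j (Finset.mem_range.mp hj)
    simp only [Finset.sum_const, Finset.card_range, nsmul_eq_mul] at h1
    push_cast at h1
    linarith
  have h3 : (k : ℝ) + 1 ≤ 1 / lam k := by
    rw [le_div_iff₀ hlamk_pos]
    linarith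
  have h4 : (1 : ℝ) / lam k = Real.exp (-Real.log (lam k)) := by
    rw [Real.exp_neg, Real.exp_log hlamk_pos, one_div]
  have h5 : -Real.log (lam k) ≤ S / ε := by
    rw [le_div_iff₀ hε0]
    linarith
  calc (k : ℝ) + 1 ≤ 1 / lam k := h3
    _ = Real.exp (-Real.log (lam k)) := h4
    _ ≤ Real.exp (S / ε) := Real.exp_le_exp.mpr h5
end

section
/- Let (λ_j)_{j≥1} be a nonincreasing summable sequence of nonnegative reals with ∑_{j=1}^∞ λ_j = 1, whose entropy series converges and satisfies ∑_{j=1}^∞ (−λ_j log λ_j) ≤ S (convention 0·log 0 = 0). Let 0 < ε < 1 and let K be the largest integer with K ≤ exp(S/ε). Then ∑_{j=K+1}^∞ λ_j < ε. -/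
/-- With `λ` 0-indexed (so `lam j` is the 1-indexed `λ_{j+1}`), nonincreasing, summable
with total sum 1 and entropy at most `S`, and `K = ⌊exp(S/ε)⌋` the largest integer
`≤ exp(S/ε)`, the tail `∑_{j=K+1}^∞ λ_j` (i.e. over 0-indexed `j ≥ K`) is `< ε`. -/
theorem stmt8 (lam : ℕ → ℝ) (hanti : Antitone lam) (hnn : ∀ j, 0 ≤ lam j)
    (hsum : Summable lam) (h1 : ∑' j, lam j = 1)
    (hent : Summable fun j => Real.negMulLog (lam j))
    (S : ℝ) (hS : ∑' j, Real.negMulLog (lam j) ≤ S)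
    (ε : ℝ) (hε0 : 0 < ε) (hε1 : ε < 1)
    (K : ℕ) (hK : K = ⌊Real.exp (S / ε)⌋₊) :
    ∑' j : ℕ, lam (K + j) < ε := by
  -- each lam j ≤ 1
  have hle1 : ∀ j, lam j ≤ 1 := by
    intro j
    have h0 : lam 0 ≤ ∑' i, lam i := Summable.le_tsum hsum 0 fun i _ => hnn i
    exact (hanti (Nat.zero_le j)).trans (by linarith [h1 ▸ h0])
  -- entropy terms nonneg
  have hterm_nn : ∀ j, 0 ≤ Real.negMulLog (lam j) := fun j =>
    Real.negMulLog_nonneg (hnn j) (hle1 j)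
  have hSnn : 0 ≤ S :=
    le_trans (tsum_nonneg hterm_nn) hS
  -- (K+1) * lam K ≤ 1
  have hKsum : (K + 1 : ℝ) * lam K ≤ 1 := by
    have h2 : ∑ i ∈ Finset.range (K + 1), lam K ≤ ∑ i ∈ Finset.range (K + 1), lam i :=
      Finset.sum_le_sum fun i hi => hanti (Nat.lt_succ_iff.mp (Finset.mem_range.mp hi))
    have h3 : ∑ i ∈ Finset.range (K + 1), lam i ≤ 1 :=
      h1 ▸ Summable.sum_le_tsum _ (fun i _ => hnn i) hsum
    simp only [Finset.sum_const, Finset.card_range, nsmul_eq_mul] at h2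
    push_cast at h2 ⊢
    linarith
  have hexpK : Real.exp (S / ε) < (K : ℝ) + 1 := by
    rw [hK]; exact Nat.lt_floor_add_one _
  have hexp_pos : (0 : ℝ) < Real.exp (S / ε) := Real.exp_pos _
  have hlamK : lam K < Real.exp (-(S / ε)) := by
    rw [Real.exp_neg]
    have hK1 : (0 : ℝ) < (K : ℝ) + 1 := by positivity
    have : lam K ≤ 1 / ((K : ℝ) + 1) := by
      rw [le_div_iff₀ hK1]; linarith [hKsum]
    calc lam K ≤ 1 / ((K : ℝ) + 1) := this
      _ < 1 / Real.exp (S / ε) := by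
          apply one_div_lt_one_div_of_lt hexp_pos hexpK
      _ = (Real.exp (S / ε))⁻¹ := one_div _
  -- termwise bound on the tail
  have hterm : ∀ j, lam (K + j) * (S / ε) ≤ Real.negMulLog (lam (K + j)) := by
    intro j
    rcases eq_or_lt_of_le (hnn (K + j)) with h0 | h0
    · simp [← h0, Real.negMulLog]
    · have hlt : lam (K + j) < Real.exp (-(S / ε)) :=
        lt_of_le_of_lt (hanti (Nat.le_add_right K j)) hlamK
      have hlog : Real.log (lam (K + j)) < -(S / ε) :=
        (Real.log_lt_iff_lt_exp h0).mpr hlt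
      have : S / ε ≤ -Real.log (lam (K + j)) := by linarith
      calc lam (K + j) * (S / ε) ≤ lam (K + j) * (-Real.log (lam (K + j))) :=
            mul_le_mul_of_nonneg_left this h0.le
        _ = Real.negMulLog (lam (K + j)) := by rw [Real.negMulLog]; ring
  have htail_sum : Summable fun j => Real.negMulLog (lam (K + j)) :=
    hent.comp_injective (add_right_injective K)
  have hTsum : Summable fun j => lam (K + j) :=
    hsum.comp_injective (add_right_injective K)
  have htail_le : ∑' j, Real.negMulLog (lam (K + j)) ≤ ∑' j, Real.negMulLog (lam j) :=
    Summable.tsum_le_tsum_of_inj (fun j => K + j) (add_right_injective K)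
      (fun c _ => hterm_nn c) (fun j => le_rfl) htail_sum hent
  by_contra hc
  push_neg at hc
  by_cases hpos : ∃ j, lam (K + j) ≠ 0
  · obtain ⟨j0, hj0⟩ := hpos
    have hj0' : 0 < lam (K + j0) := lt_of_le_of_ne (hnn _) (Ne.symm hj0)
    have hstrict : lam (K + j0) * (S / ε) < Real.negMulLog (lam (K + j0)) := by
      have hlt : lam (K + j0) < Real.exp (-(S / ε)) :=
        lt_of_le_of_lt (hanti (Nat.le_add_right K j0)) hlamK
      have hlog : Real.log (lam (K + j0)) < -(S / ε) :=
        (Real.log_lt_iff_lt_exp hj0').mpr hlt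
      have : S / ε < -Real.log (lam (K + j0)) := by linarith
      calc lam (K + j0) * (S / ε) < lam (K + j0) * (-Real.log (lam (K + j0))) :=
            (mul_lt_mul_iff_right₀ hj0').mpr this
        _ = Real.negMulLog (lam (K + j0)) := by rw [Real.negMulLog]; ring
    have hchain : S < S := by
      calc S = ε * (S / ε) := by field_simp
        _ ≤ (∑' j, lam (K + j)) * (S / ε) :=
            mul_le_mul_of_nonneg_right hc (div_nonneg hSnn hε0.le)
        _ = ∑' j, lam (K + j) * (S / ε) := (tsum_mul_right).symm
        _ < ∑' j, Real.negMulLog (lam (K + j)) :=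
            Summable.tsum_lt_tsum hterm hstrict (hTsum.mul_right _) htail_sum
        _ ≤ ∑' j, Real.negMulLog (lam j) := htail_le
        _ ≤ S := hS
    exact lt_irrefl _ hchain
  · push_neg at hpos
    have : ∑' j : ℕ, lam (K + j) = 0 := by simp [hpos]
    linarith
end
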